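/- Concavity of the N-CIRL one-stage backup in the belief: let v : Δ(Θ) → ℝ be concave, and define [Gv](b) = max_{A ∈ 𝒜(b)} min_{δ ∈ Δ(D)} { ∑_{a,d,ϑ} A_ϑ(a) δ(d) r(a,d,ϑ) + γ ∑_{a,d} δ(d) m(a) q(a,d) v(b_a) }, where 𝒜(b) = { A ≥ 0 : ∑_a A_ϑ(a) = b(ϑ) ∀ϑ }, m(a) = ∑_ϑ A_ϑ(a), q(a,d) ∈ [0,1], and b_a(ϑ) = A_ϑ(a)/m(a) when m(a) > 0. Then b ↦ [Gv](b) is concave on Δ(Θ). -/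

import Mathlib

/-!
For fixed `δ`, the objective is concave in the joint variable `A`: the reward term is linear,
and `m(a) · v(b_a)` is the perspective `p ↦ (∑ p) · v(p / ∑ p)` of `v`, which is positively
homogeneous and superadditive, hence concave on the nonnegative orthant. An infimum of concave
functions is concave, and since `t • 𝒜(b₁) + u • 𝒜(b₂) ⊆ 𝒜(t • b₁ + u • b₂)`, maximizing a
concave function of `A` over the fibre `𝒜(b)` gives a concave function of `b`. In `ℝ` these
suprema and infima need bounded families: a concave function on the simplex is bounded below by
its values at the vertices, and above by reflecting through the barycentre.
-/

open Finset

def Simplex (D : Type*) [Fintype D] : Type _ :=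
  {δ : D → ℝ // (∀ d, 0 ≤ δ d) ∧ ∑ d, δ d = 1}

theorem ConcaveOn.bddBelow_image_stdSimplex {ι : Type*} [Fintype ι] {f : (ι → ℝ) → ℝ}
    (hf : ConcaveOn ℝ (stdSimplex ℝ ι) f) : BddBelow (f '' stdSimplex ℝ ι) := by
  classical
  obtain ⟨L, hL⟩ := ((Set.finite_range fun i : ι ↦ (Pi.single i 1 : ι → ℝ)).image f).bddBelow
  refine ⟨L, ?_⟩
  rintro _ ⟨x, hx, rfl⟩
  rw [← convexHull_rangle_single_eq_stdSimplex] at hx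
  obtain ⟨y, hy, hyx⟩ := hf.exists_le_of_mem_convexHull
    (Set.range_subset_iff.2 (single_mem_stdSimplex ℝ)) hx
  exact (hL ⟨y, hy, rfl⟩).trans hyx

theorem ConcaveOn.bddAbove_image_of_bddBelow_image {E : Type*} [AddCommGroup E] [Module ℝ E]
    {s : Set E} {f : E → ℝ} (hf : ConcaveOn ℝ s f) (hbdd : BddBelow (f '' s)) {c : E} {ε : ℝ}
    (hε : 0 < ε) (hc : ∀ x ∈ s, c + ε • (c - x) ∈ s) : BddAbove (f '' s) := by
  obtain ⟨L, hL⟩ := hbdd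
  refine ⟨((1 + ε) * f c - L) / ε, ?_⟩
  rintro _ ⟨x, hx, rfl⟩
  have hc_eq : (ε / (1 + ε)) • x + (1 / (1 + ε)) • (c + ε • (c - x)) = c := by
    match_scalars <;> field_simp; ring
  have hconc := hf.2 hx (hc x hx) (by positivity : 0 ≤ ε / (1 + ε))
    (by positivity : 0 ≤ 1 / (1 + ε)) (by field_simp; ring)
  rw [hc_eq, smul_eq_mul, smul_eq_mul] at hconc
  have hLx := hL ⟨_, hc x hx, rfl⟩
  rw [le_div_iff₀ hε]
  have h := mul_le_mul_of_nonneg_left hconc (by positivity : (0:ℝ) ≤ 1 + ε)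
  field_simp at h
  linarith

theorem ConcaveOn.bddAbove_image_stdSimplex {ι : Type*} [Fintype ι] [Nonempty ι]
    {f : (ι → ℝ) → ℝ} (hf : ConcaveOn ℝ (stdSimplex ℝ ι) f) : BddAbove (f '' stdSimplex ℝ ι) := by
  set n : ℝ := (Fintype.card ι : ℝ)
  have hn : 0 < n := by positivity
  refine hf.bddAbove_image_of_bddBelow_image hf.bddBelow_image_stdSimplex (c := fun _ ↦ n⁻¹)
    (inv_pos.2 hn) fun x hx ↦ ⟨fun i ↦ ?_, ?_⟩
  · have hxi : 0 ≤ 1 + n⁻¹ - x i := by linarith [(mem_Icc_of_mem_stdSimplex hx i).2, inv_pos.2 hn]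
    calc (0 : ℝ) ≤ n⁻¹ * (1 + n⁻¹ - x i) := mul_nonneg (inv_pos.2 hn).le hxi
      _ = _ := by simp only [Pi.add_apply, Pi.smul_apply, Pi.sub_apply, smul_eq_mul]; ring
  · simp [Finset.sum_add_distrib, ← Finset.mul_sum, Finset.sum_sub_distrib, hx.2, n]

theorem ConcaveOn.ciInf {ι E : Type*} [AddCommMonoid E] [Module ℝ E] [Nonempty ι] {s : Set E}
    {g : ι → E → ℝ} (hg : ∀ i, ConcaveOn ℝ s (g i))
    (hbdd : ∀ x ∈ s, BddBelow (Set.range fun i ↦ g i x)) :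
    ConcaveOn ℝ s fun x ↦ ⨅ i, g i x := by
  refine ⟨(hg (Classical.arbitrary ι)).1, fun x hx y hy t u ht hu htu ↦ le_ciInf fun i ↦ ?_⟩
  calc t • (⨅ i, g i x) + u • ⨅ i, g i y ≤ t • g i x + u • g i y := by
        gcongr
        · exact ciInf_le (hbdd x hx) i
        · exact ciInf_le (hbdd y hy) i
    _ ≤ g i (t • x + u • y) := (hg i).2 hx hy ht hu htu

theorem ConcaveOn.ciSup_fiber {E F : Type*} [AddCommMonoid E] [Module ℝ E] [AddCommMonoid F]
    [Module ℝ F] {s : Set F} {K : Set E} {S : F → Set E} {f : E → ℝ} (hs : Convex ℝ s)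
    (hf : ConcaveOn ℝ K f) (hSK : ∀ b ∈ s, S b ⊆ K)
    (hS : ∀ ⦃b₁ b₂ x₁ x₂⦄ ⦃t u : ℝ⦄, 0 ≤ t → 0 ≤ u → x₁ ∈ S b₁ → x₂ ∈ S b₂ →
      t • x₁ + u • x₂ ∈ S (t • b₁ + u • b₂))
    (hne : ∀ b ∈ s, (S b).Nonempty) (hbdd : ∀ b ∈ s, BddAbove (f '' S b)) :
    ConcaveOn ℝ s fun b ↦ ⨆ x : S b, f x := by
  refine ⟨hs, fun b₁ hb₁ b₂ hb₂ t u ht hu htu ↦ ?_⟩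
  have := (hne b₁ hb₁).to_subtype
  have := (hne b₂ hb₂).to_subtype
  have hb := hs hb₁ hb₂ ht hu htu
  rw [smul_eq_mul, smul_eq_mul, Real.mul_iSup_of_nonneg ht, Real.mul_iSup_of_nonneg hu]
  refine ciSup_add_ciSup_le fun x₁ x₂ ↦ ?_
  calc t * f x₁ + u * f x₂ ≤ f (t • x₁ + u • x₂) :=
        hf.2 (hSK b₁ hb₁ x₁.2) (hSK b₂ hb₂ x₂.2) ht hu htu
    _ ≤ ⨆ x : S (t • b₁ + u • b₂), f x :=
        le_ciSup (f := fun x : S (t • b₁ + u • b₂) ↦ f x)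
          (by rw [← Set.image_eq_range]; exact hbdd _ hb) ⟨_, hS ht hu x₁.2 x₂.2⟩

instance Simplex.instNonempty {D : Type*} [Fintype D] [Nonempty D] : Nonempty (Simplex D) := by
  classical
  exact ⟨⟨Pi.single (Classical.arbitrary D) 1, single_mem_stdSimplex ℝ _⟩⟩

theorem Simplex.bddBelow_range {D : Type*} [Fintype D] {g : (D → ℝ) → ℝ} (hg : Continuous g) :
    BddBelow (Set.range fun δ : Simplex D ↦ g δ.1) :=
  ((isCompact_stdSimplex ℝ D).bddBelow_image hg.continuousOn).mono
    (by rintro _ ⟨δ, rfl⟩; exact ⟨δ.1, δ.2, rfl⟩)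

namespace NCIRL

section Perspective

variable {Θ : Type*} [Fintype Θ]

noncomputable def posterior (p : Θ → ℝ) : Θ → ℝ := fun ϑ ↦ p ϑ / ∑ ϑ', p ϑ'

-- Where `∑ p = 0` the posterior is the junk value `0`, but the factor `∑ p` cancels it.
noncomputable def perspective (v : (Θ → ℝ) → ℝ) (p : Θ → ℝ) : ℝ := (∑ ϑ, p ϑ) * v (posterior p)

theorem posterior_mem_stdSimplex {p : Θ → ℝ} (hp : 0 ≤ p) (hm : 0 < ∑ ϑ, p ϑ) :
    posterior p ∈ stdSimplex ℝ Θ :=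
  ⟨fun ϑ ↦ div_nonneg (hp ϑ) hm.le, by simp only [posterior, ← Finset.sum_div, div_self hm.ne']⟩

theorem posterior_smul {c : ℝ} (hc : c ≠ 0) (p : Θ → ℝ) : posterior (c • p) = posterior p := by
  funext ϑ
  simp only [posterior, Pi.smul_apply, smul_eq_mul, ← Finset.mul_sum, mul_div_mul_left _ _ hc]

theorem perspective_smul (v : (Θ → ℝ) → ℝ) {c : ℝ} (hc : 0 ≤ c) (p : Θ → ℝ) :
    perspective v (c • p) = c * perspective v p := by
  rcases hc.eq_or_lt with rfl | hc
  · simp [perspective]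
  · simp only [perspective, posterior_smul hc.ne', Pi.smul_apply, smul_eq_mul, ← Finset.mul_sum]
    ring

theorem perspective_le_mul {v : (Θ → ℝ) → ℝ} {U : ℝ} (hU : ∀ x ∈ stdSimplex ℝ Θ, v x ≤ U)
    {p : Θ → ℝ} (hp : 0 ≤ p) : perspective v p ≤ (∑ ϑ, p ϑ) * U := by
  rcases (Finset.sum_nonneg fun ϑ _ ↦ hp ϑ : 0 ≤ ∑ ϑ, p ϑ).eq_or_lt with hm | hm
  · simp [perspective, ← hm]
  · exact mul_le_mul_of_nonneg_left (hU _ (posterior_mem_stdSimplex hp hm)) hm.le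

theorem perspective_add_le {v : (Θ → ℝ) → ℝ} (hv : ConcaveOn ℝ (stdSimplex ℝ Θ) v)
    {p₁ p₂ : Θ → ℝ} (hp₁ : 0 ≤ p₁) (hp₂ : 0 ≤ p₂) :
    perspective v p₁ + perspective v p₂ ≤ perspective v (p₁ + p₂) := by
  rcases (Finset.sum_nonneg fun ϑ _ ↦ hp₁ ϑ : 0 ≤ ∑ ϑ, p₁ ϑ).eq_or_lt with hm₁ | hm₁
  · simp [(Fintype.sum_eq_zero_iff_of_nonneg hp₁).1 hm₁.symm, perspective]
  rcases (Finset.sum_nonneg fun ϑ _ ↦ hp₂ ϑ : 0 ≤ ∑ ϑ, p₂ ϑ).eq_or_lt with hm₂ | hm₂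
  · simp [(Fintype.sum_eq_zero_iff_of_nonneg hp₂).1 hm₂.symm, perspective]
  set m₁ := ∑ ϑ, p₁ ϑ
  set m₂ := ∑ ϑ, p₂ ϑ
  have hm : 0 < m₁ + m₂ := add_pos hm₁ hm₂
  have hmix : (m₁ / (m₁ + m₂)) • posterior p₁ + (m₂ / (m₁ + m₂)) • posterior p₂
      = posterior (p₁ + p₂) := by
    funext ϑ
    change m₁ / (m₁ + m₂) * (p₁ ϑ / m₁) + m₂ / (m₁ + m₂) * (p₂ ϑ / m₂)
      = (p₁ ϑ + p₂ ϑ) / ∑ ϑ, (p₁ ϑ + p₂ ϑ)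
    rw [Finset.sum_add_distrib]
    change _ = _ / (m₁ + m₂)
    field_simp
  have hconc := hv.2 (posterior_mem_stdSimplex hp₁ hm₁) (posterior_mem_stdSimplex hp₂ hm₂)
    (div_nonneg hm₁.le hm.le) (div_nonneg hm₂.le hm.le) (by field_simp)
  rw [hmix, smul_eq_mul, smul_eq_mul] at hconc
  have h := mul_le_mul_of_nonneg_left hconc hm.le
  simp only [perspective, Pi.add_apply, Finset.sum_add_distrib]
  field_simp at h
  linarith

theorem concaveOn_perspective {v : (Θ → ℝ) → ℝ} (hv : ConcaveOn ℝ (stdSimplex ℝ Θ) v) :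
    ConcaveOn ℝ (Set.Ici 0) (perspective v) := by
  refine ⟨convex_Ici 0, fun p₁ hp₁ p₂ hp₂ t u ht hu _ ↦ ?_⟩
  rw [smul_eq_mul, smul_eq_mul, ← perspective_smul v ht, ← perspective_smul v hu]
  exact perspective_add_le hv (smul_nonneg ht hp₁) (smul_nonneg hu hp₂)

end Perspective

def jointPolicies {Θ : Type*} (A : Type*) [Fintype A] (b : Θ → ℝ) : Set (Θ → A → ℝ) :=
  {Av | (∀ ϑ a, 0 ≤ Av ϑ a) ∧ ∀ ϑ, ∑ a, Av ϑ a = b ϑ}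

section JointPolicies

variable {Θ A : Type*} [Fintype A]

theorem jointPolicies_nonempty [Nonempty A] {b : Θ → ℝ} (hb : 0 ≤ b) :
    (jointPolicies A b).Nonempty := by
  classical
  obtain ⟨a₀⟩ := ‹Nonempty A›
  exact ⟨fun ϑ ↦ Pi.single a₀ (b ϑ), fun ϑ ↦
    (Pi.single_nonneg.2 (hb ϑ) : (0 : A → ℝ) ≤ Pi.single a₀ (b ϑ)), fun ϑ ↦ by simp⟩

theorem smul_add_smul_mem_jointPolicies {b₁ b₂ : Θ → ℝ} {Av₁ Av₂ : Θ → A → ℝ} {t u : ℝ}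
    (ht : 0 ≤ t) (hu : 0 ≤ u) (h₁ : Av₁ ∈ jointPolicies A b₁) (h₂ : Av₂ ∈ jointPolicies A b₂) :
    t • Av₁ + u • Av₂ ∈ jointPolicies A (t • b₁ + u • b₂) :=
  ⟨fun ϑ a ↦ add_nonneg (mul_nonneg ht (h₁.1 ϑ a)) (mul_nonneg hu (h₂.1 ϑ a)), fun ϑ ↦ by
    simp [Finset.sum_add_distrib, ← Finset.mul_sum, h₁.2, h₂.2]⟩

theorem le_of_mem_jointPolicies {b : Θ → ℝ} {Av : Θ → A → ℝ} (h : Av ∈ jointPolicies A b)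
    (ϑ : Θ) (a : A) : Av ϑ a ≤ b ϑ :=
  h.2 ϑ ▸ Finset.single_le_sum (fun a _ ↦ h.1 ϑ a) (mem_univ a)

end JointPolicies

section BackupObjective

variable {Θ A D : Type*} [Fintype Θ] [Fintype A] [Fintype D]

noncomputable def backupObjective (γ : ℝ) (r : A → D → Θ → ℝ) (q : A → D → ℝ)
    (v : (Θ → ℝ) → ℝ) (Av : Θ → A → ℝ) (δ : D → ℝ) : ℝ :=
  (∑ a, ∑ d, ∑ ϑ, Av ϑ a * δ d * r a d ϑ) +
    γ * ∑ a, ∑ d, δ d * (∑ ϑ, Av ϑ a) * q a d * v (fun ϑ => Av ϑ a / ∑ ϑ', Av ϑ' a)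

theorem backupObjective_eq (γ : ℝ) (r : A → D → Θ → ℝ) (q : A → D → ℝ) (v : (Θ → ℝ) → ℝ)
    (Av : Θ → A → ℝ) (δ : D → ℝ) :
    backupObjective γ r q v Av δ = (∑ a, ∑ d, ∑ ϑ, Av ϑ a * δ d * r a d ϑ) +
      γ * ∑ a, ∑ d, δ d * q a d * perspective v (fun ϑ ↦ Av ϑ a) := by
  unfold backupObjective perspective
  congr 2
  refine Finset.sum_congr rfl fun a _ ↦ Finset.sum_congr rfl fun d _ ↦ ?_
  rw [mul_right_comm (δ d), mul_assoc]
  rfl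

theorem continuous_backupObjective (γ : ℝ) (r : A → D → Θ → ℝ) (q : A → D → ℝ)
    (v : (Θ → ℝ) → ℝ) (Av : Θ → A → ℝ) : Continuous (backupObjective γ r q v Av) := by
  unfold backupObjective
  fun_prop

theorem concaveOn_backupObjective {γ : ℝ} (hγ : 0 ≤ γ) (r : A → D → Θ → ℝ) {q : A → D → ℝ}
    (hq : ∀ a d, 0 ≤ q a d) {v : (Θ → ℝ) → ℝ} (hv : ConcaveOn ℝ (stdSimplex ℝ Θ) v)
    {δ : D → ℝ} (hδ : ∀ d, 0 ≤ δ d) :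
    ConcaveOn ℝ (Set.Ici 0) fun Av ↦ backupObjective γ r q v Av δ := by
  refine ⟨convex_Ici 0, fun Av₁ h₁ Av₂ h₂ t u ht hu htu ↦ ?_⟩
  simp only [backupObjective_eq, smul_eq_mul]
  have hreward : ∑ a, ∑ d, ∑ ϑ, (t • Av₁ + u • Av₂) ϑ a * δ d * r a d ϑ =
      t * ∑ a, ∑ d, ∑ ϑ, Av₁ ϑ a * δ d * r a d ϑ + u * ∑ a, ∑ d, ∑ ϑ, Av₂ ϑ a * δ d * r a d ϑ := by
    simp only [Pi.add_apply, Pi.smul_apply, smul_eq_mul, Finset.mul_sum, ← Finset.sum_add_distrib]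
    refine Finset.sum_congr rfl fun a _ ↦ Finset.sum_congr rfl fun d _ ↦
      Finset.sum_congr rfl fun ϑ _ ↦ ?_
    ring
  have hvalue : t * ∑ a, ∑ d, δ d * q a d * perspective v (fun ϑ ↦ Av₁ ϑ a) +
      u * ∑ a, ∑ d, δ d * q a d * perspective v (fun ϑ ↦ Av₂ ϑ a) ≤
      ∑ a, ∑ d, δ d * q a d * perspective v (fun ϑ ↦ (t • Av₁ + u • Av₂) ϑ a) := by
    simp only [Finset.mul_sum, ← Finset.sum_add_distrib]
    refine Finset.sum_le_sum fun a _ ↦ Finset.sum_le_sum fun d _ ↦ ?_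
    calc _ = δ d * q a d * (t • perspective v (fun ϑ ↦ Av₁ ϑ a) +
            u • perspective v (fun ϑ ↦ Av₂ ϑ a)) := by simp only [smul_eq_mul]; ring
      _ ≤ _ := mul_le_mul_of_nonneg_left
          ((concaveOn_perspective hv).2 (fun ϑ ↦ h₁ ϑ a) (fun ϑ ↦ h₂ ϑ a) ht hu htu)
          (mul_nonneg (hδ d) (hq a d))
  rw [hreward]
  linarith [mul_le_mul_of_nonneg_left hvalue hγ]

theorem backupObjective_le {γ : ℝ} (hγ : 0 ≤ γ) (r : A → D → Θ → ℝ) {q : A → D → ℝ}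
    (hq : ∀ a d, 0 ≤ q a d) {v : (Θ → ℝ) → ℝ} {U : ℝ} (hU0 : 0 ≤ U)
    (hU : ∀ x ∈ stdSimplex ℝ Θ, v x ≤ U) {δ : D → ℝ} (hδ : ∀ d, 0 ≤ δ d) {b : Θ → ℝ}
    (hb : b ∈ stdSimplex ℝ Θ) {Av : Θ → A → ℝ} (hAv : Av ∈ jointPolicies A b) :
    backupObjective γ r q v Av δ ≤
      (∑ a, ∑ d, ∑ ϑ, |δ d * r a d ϑ|) + γ * ∑ a, ∑ d, δ d * q a d * U := by
  have hle_one : ∀ ϑ a, Av ϑ a ≤ 1 := fun ϑ a ↦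
    (le_of_mem_jointPolicies hAv ϑ a).trans (mem_Icc_of_mem_stdSimplex hb ϑ).2
  have hmarginal_le_one : ∀ a, ∑ ϑ, Av ϑ a ≤ 1 := fun a ↦
    (Finset.sum_le_sum fun ϑ _ ↦ le_of_mem_jointPolicies hAv ϑ a).trans hb.2.le
  rw [backupObjective_eq]
  refine add_le_add (Finset.sum_le_sum fun a _ ↦ Finset.sum_le_sum fun d _ ↦
    Finset.sum_le_sum fun ϑ _ ↦ ?_) (mul_le_mul_of_nonneg_left (Finset.sum_le_sum fun a _ ↦
    Finset.sum_le_sum fun d _ ↦ mul_le_mul_of_nonneg_left ?_ (mul_nonneg (hδ d) (hq a d))) hγ)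
  · rw [mul_assoc]
    exact (mul_le_mul_of_nonneg_left (le_abs_self _) (hAv.1 ϑ a)).trans
      (mul_le_of_le_one_left (abs_nonneg _) (hle_one ϑ a))
  · calc perspective v (fun ϑ ↦ Av ϑ a) ≤ (∑ ϑ, Av ϑ a) * U :=
          perspective_le_mul hU fun ϑ ↦ hAv.1 ϑ a
      _ ≤ U := mul_le_of_le_one_left hU0 (hmarginal_le_one a)

theorem bddAbove_iInf_backupObjective [Nonempty Θ] [Nonempty D] {γ : ℝ} (hγ : 0 ≤ γ)
    (r : A → D → Θ → ℝ) {q : A → D → ℝ} (hq : ∀ a d, 0 ≤ q a d) {v : (Θ → ℝ) → ℝ}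
    (hv : ConcaveOn ℝ (stdSimplex ℝ Θ) v) {b : Θ → ℝ} (hb : b ∈ stdSimplex ℝ Θ) :
    BddAbove ((fun Av ↦ ⨅ δ : Simplex D, backupObjective γ r q v Av δ.1) '' jointPolicies A b) := by
  obtain ⟨U, hU0, hU⟩ := hv.bddAbove_image_stdSimplex.exists_ge 0
  let δ₀ := Classical.arbitrary (Simplex D)
  refine ⟨(∑ a, ∑ d, ∑ ϑ, |δ₀.1 d * r a d ϑ|) + γ * ∑ a, ∑ d, δ₀.1 d * q a d * U, ?_⟩
  rintro _ ⟨Av, hAv, rfl⟩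
  exact (ciInf_le (Simplex.bddBelow_range (continuous_backupObjective γ r q v Av)) δ₀).trans
    (backupObjective_le hγ r hq hU0 (fun x hx ↦ hU _ ⟨x, hx, rfl⟩) δ₀.2.1 hb hAv)

end BackupObjective

end NCIRL

theorem primal_backup_preserves_concavity_general
    {Θ A D : Type*} [Fintype Θ] [Fintype A] [Fintype D]
    [Nonempty Θ] [Nonempty A] [Nonempty D]
    (γ : ℝ) (hγ0 : 0 ≤ γ)
    (r : A → D → Θ → ℝ)
    (q : A → D → ℝ) (hq0 : ∀ a d, 0 ≤ q a d)
    (v : (Θ → ℝ) → ℝ) (hv : ConcaveOn ℝ (stdSimplex ℝ Θ) v)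
    (Gv : (Θ → ℝ) → ℝ)
    (hG : ∀ b : Θ → ℝ, Gv b =
      ⨆ Av : {Av : Θ → A → ℝ // (∀ ϑ a, 0 ≤ Av ϑ a) ∧ ∀ ϑ, ∑ a, Av ϑ a = b ϑ},
        ⨅ δ : Simplex D,
          ((∑ a, ∑ d, ∑ ϑ, Av.1 ϑ a * δ.1 d * r a d ϑ) +
            γ * ∑ a, ∑ d, δ.1 d * (∑ ϑ, Av.1 ϑ a) * q a d *
              v (fun ϑ => Av.1 ϑ a / ∑ ϑ', Av.1 ϑ' a))) :
    ConcaveOn ℝ (stdSimplex ℝ Θ) Gv := by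
  have hGv : Gv = fun b ↦
      ⨆ Av : NCIRL.jointPolicies A b, ⨅ δ : Simplex D, NCIRL.backupObjective γ r q v Av.1 δ.1 :=
    funext hG
  rw [hGv]
  exact ConcaveOn.ciSup_fiber (convex_stdSimplex ℝ Θ)
    (ConcaveOn.ciInf (fun δ ↦ NCIRL.concaveOn_backupObjective hγ0 r hq0 hv δ.2.1)
      fun Av _ ↦ Simplex.bddBelow_range (NCIRL.continuous_backupObjective γ r q v Av))
    (fun _ _ _ hAv ϑ a ↦ hAv.1 ϑ a) (fun _ _ _ _ _ _ ↦ NCIRL.smul_add_smul_mem_jointPolicies)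
    (fun _ hb ↦ NCIRL.jointPolicies_nonempty hb.1)
    (fun _ hb ↦ NCIRL.bddAbove_iInf_backupObjective hγ0 r hq0 hv hb)

/-- Concavity in the belief of the N-CIRL one-stage primal backup
(Proposition 1): with joint variables `Av ϑ a` encoding `π^A(a|ϑ)b(ϑ)`,
marginal `m(a) = ∑_ϑ Av ϑ a` and posterior `b_a(ϑ) = Av ϑ a / m(a)`, the backup
`[Gv](b) = max_{Av ∈ 𝒜(b)} min_{δ ∈ Δ(D)} { ∑ Av ϑ a · δ d · r(a,d,ϑ)
  + γ ∑ δ d · m(a) · q(a,d) · v(b_a) }`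
of a concave `v` is concave on the simplex. -/
theorem primal_backup_preserves_concavity
    {Θ A D : Type*} [Fintype Θ] [Fintype A] [Fintype D]
    [Nonempty Θ] [Nonempty A] [Nonempty D]
    (γ : ℝ) (hγ0 : 0 ≤ γ) (hγ1 : γ < 1)
    (r : A → D → Θ → ℝ)
    (q : A → D → ℝ) (hq0 : ∀ a d, 0 ≤ q a d) (hq1 : ∀ a d, q a d ≤ 1)
    (v : (Θ → ℝ) → ℝ) (hv : ConcaveOn ℝ (stdSimplex ℝ Θ) v)
    (Gv : (Θ → ℝ) → ℝ)
    (hG : ∀ b : Θ → ℝ, Gv b =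
      ⨆ Av : {Av : Θ → A → ℝ // (∀ ϑ a, 0 ≤ Av ϑ a) ∧ ∀ ϑ, ∑ a, Av ϑ a = b ϑ},
        ⨅ δ : Simplex D,
          ((∑ a, ∑ d, ∑ ϑ, Av.1 ϑ a * δ.1 d * r a d ϑ) +
            γ * ∑ a, ∑ d, δ.1 d * (∑ ϑ, Av.1 ϑ a) * q a d *
              v (fun ϑ => Av.1 ϑ a / ∑ ϑ', Av.1 ϑ' a))) :
    ConcaveOn ℝ (stdSimplex ℝ Θ) Gv :=
  primal_backup_preserves_concavity_general γ hγ0 r q hq0 v hv Gv hG
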